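/- Let k > 0, 1 < α ≤ 2, and for φ ∈ H^1(R^3) set s(λ) = S_k(φ_λ^{3,−2}) where φ_λ^{3,−2}(x) = e^{3λ}φ(e^{2λ}x). Then s'(λ) = P_k(φ_λ^{3,−2}) and s''(λ) ≤ 4 s'(λ) − 3 e^{6λ}∫|φ|⁴ ≤ 4 s'(λ) for all λ ∈ R. -/

import Mathlib

open MeasureTheory Real Filter Topology
open scoped ENNReal RealInnerProductSpace

noncomputable section

abbrev E3 : Type := EuclideanSpace ℝ (Fin 3)

/-- The potential `V(x) = k * |x| ^ (-α)`. -/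
def Vpot (k α : ℝ) (x : E3) : ℝ := k * ‖x‖ ^ (-α)

/-- The complex Laplacian (sum of second partial derivatives). -/
def lapC (f : E3 → ℂ) (x : E3) : ℂ :=
  ∑ i : Fin 3, fderiv ℝ (fun y => fderiv ℝ f y (EuclideanSpace.single i (1:ℝ))) x
    (EuclideanSpace.single i (1:ℝ))

/-- The real Laplacian. -/
def lapR (f : E3 → ℝ) (x : E3) : ℝ :=
  ∑ i : Fin 3, fderiv ℝ (fun y => fderiv ℝ f y (EuclideanSpace.single i (1:ℝ))) x
    (EuclideanSpace.single i (1:ℝ))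

/-- `∫ |∇φ|²`. -/
def gradSq (φ : E3 → ℂ) : ℝ := ∫ x, ‖fderiv ℝ φ x‖ ^ 2

/-- `∫ |φ|²`. -/
def massI (φ : E3 → ℂ) : ℝ := ∫ x, ‖φ x‖ ^ 2

/-- `∫ V |φ|²`. -/
def potI (k α : ℝ) (φ : E3 → ℂ) : ℝ := ∫ x, Vpot k α x * ‖φ x‖ ^ 2

/-- `∫ |φ|⁴`. -/
def quartI (φ : E3 → ℂ) : ℝ := ∫ x, ‖φ x‖ ^ 4

/-- `∫ (x · ∇V) |φ|²`. -/
def xdVI (k α : ℝ) (φ : E3 → ℂ) : ℝ :=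
  ∫ x, ⟪x, gradient (Vpot k α) x⟫ * ‖φ x‖ ^ 2

/-- `∫ (x ∇²V xᵀ) |φ|²`. -/
def hessI (k α : ℝ) (φ : E3 → ℂ) : ℝ :=
  ∫ x, ⟪x, fderiv ℝ (gradient (Vpot k α)) x x⟫ * ‖φ x‖ ^ 2

/-- Squared `𝓗¹_k` norm:  `∫|∇φ|² + ∫V|φ|² + ∫|φ|²`. -/
def H1kSq (k α : ℝ) (φ : E3 → ℂ) : ℝ := gradSq φ + potI k α φ + massI φ

/-- The action functional `S_k`. -/
def Sk (k α : ℝ) (φ : E3 → ℂ) : ℝ := (1/2) * H1kSq k α φ - (1/4) * quartI φ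

/-- The scaling-derivative functional `K_k^{a,b}`. -/
def Kab (k α a b : ℝ) (φ : E3 → ℂ) : ℝ :=
  ((2*a+b)/2) * gradSq φ + ((2*a+3*b)/2) * potI k α φ + (b/2) * xdVI k α φ
    + ((2*a+3*b)/2) * massI φ - ((4*a+3*b)/4) * quartI φ

/-- The virial functional `P_k = K_k^{3,-2}`. -/
def Pk (k α : ℝ) (φ : E3 → ℂ) : ℝ :=
  2 * gradSq φ - xdVI k α φ - (3/2) * quartI φ

/-- The functional `I_k = K_k^{3,0}/3`. -/
def Ik (k α : ℝ) (φ : E3 → ℂ) : ℝ :=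
  gradSq φ + potI k α φ + massI φ - quartI φ

/-- The functional `J_k^{a,b} = S_k - K_k^{a,b}/(2a+b)`. -/
def Jab (k α a b : ℝ) (φ : E3 → ℂ) : ℝ := Sk k α φ - Kab k α a b φ / (2*a+b)

/-- The scaling `φ_λ^{a,b}(x) = e^{aλ} φ(e^{-bλ} x)`. -/
def scal (a b lam : ℝ) (φ : E3 → ℂ) : E3 → ℂ :=
  fun x => Real.exp (a * lam) • φ (Real.exp (-b * lam) • x)

/-- Membership in `H¹(ℝ³)` (with the relevant integrability properties). -/
def InH1 (φ : E3 → ℂ) : Prop :=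
  MemLp φ 2 volume ∧ MemLp φ 4 volume ∧
    Integrable (fun x => ‖fderiv ℝ φ x‖ ^ 2) volume

/-- The minimization threshold `n_k^{a,b}`. -/
def nThresh (k α a b : ℝ) : ℝ :=
  sInf {r | ∃ φ : E3 → ℂ, InH1 φ ∧ eLpNorm φ 2 volume ≠ 0 ∧
    Kab k α a b φ = 0 ∧ r = Sk k α φ}

/-- The threshold `n_k` defined with the virial functional `P_k`. -/
def nPk (k α : ℝ) : ℝ :=
  sInf {r | ∃ φ : E3 → ℂ, InH1 φ ∧ eLpNorm φ 2 volume ≠ 0 ∧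
    Pk k α φ = 0 ∧ r = Sk k α φ}

/-- The ground state threshold `n₀`. -/
def n0 (α : ℝ) : ℝ := nPk 0 α

/-!
Under the scaling `φ_λ(x) = e^{aλ} φ(e^{-bλ} x)` each term of `S_k` is multiplied by an
exponential: `∫|∇φ_λ|² = e^{(2a+b)λ} ∫|∇φ|²`, `∫V|φ_λ|² = e^{(2a+3b-αb)λ} ∫V|φ|²` (since `V` is
homogeneous of degree `-α`), `∫|φ_λ|² = e^{(2a+3b)λ} ∫|φ|²` and `∫|φ_λ|⁴ = e^{(4a+3b)λ} ∫|φ|⁴`.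
With Euler's identity `x · ∇V = -αV`, differentiating in `λ` gives `s' = K_k^{a,b}(φ_λ)`, which is
`P_k(φ_λ)` for `(a, b) = (3, -2)`. Differentiating once more,
`s'' - 4s' + 3 ∫|φ_λ|⁴ = -2α(2 - α) ∫V|φ_λ|² ≤ 0` because `k > 0` and `0 < α ≤ 2`.
-/

theorem integral_comp_exp_smul {E F : Type*} [NormedAddCommGroup E] [NormedSpace ℝ E]
    [MeasurableSpace E] [BorelSpace E] [FiniteDimensional ℝ E] (μ : Measure E)
    [μ.IsAddHaarMeasure] [NormedAddCommGroup F] [NormedSpace ℝ F] (g : E → F) (t : ℝ) :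
    ∫ x, g (Real.exp t • x) ∂μ = Real.exp (-(Module.finrank ℝ E * t)) • ∫ x, g x ∂μ := by
  rw [Measure.integral_comp_smul, ← Real.exp_nat_mul, ← Real.exp_neg,
    abs_of_pos (Real.exp_pos _)]

theorem norm_scal (a b l : ℝ) (φ : E3 → ℂ) (x : E3) :
    ‖scal a b l φ x‖ = Real.exp (a * l) * ‖φ (Real.exp (-b * l) • x)‖ := by
  rw [scal, norm_smul, Real.norm_of_nonneg (Real.exp_pos _).le]

theorem integral_norm_scal_pow (a b l : ℝ) (φ : E3 → ℂ) (n : ℕ) :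
    ∫ x, ‖scal a b l φ x‖ ^ n = Real.exp ((n * a + 3 * b) * l) * ∫ x, ‖φ x‖ ^ n := by
  simp_rw [norm_scal, mul_pow]
  rw [integral_const_mul, integral_comp_exp_smul volume (fun y => ‖φ y‖ ^ n),
    finrank_euclideanSpace_fin, smul_eq_mul, ← mul_assoc, ← Real.exp_nat_mul, ← Real.exp_add]
  ring_nf

theorem massI_scal (a b l : ℝ) (φ : E3 → ℂ) :
    massI (scal a b l φ) = Real.exp ((2 * a + 3 * b) * l) * massI φ := by
  simpa [massI] using integral_norm_scal_pow a b l φ 2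

theorem quartI_scal (a b l : ℝ) (φ : E3 → ℂ) :
    quartI (scal a b l φ) = Real.exp ((4 * a + 3 * b) * l) * quartI φ := by
  simpa [quartI] using integral_norm_scal_pow a b l φ 4

theorem Vpot_smul (k α : ℝ) {r : ℝ} (hr : 0 < r) (x : E3) :
    Vpot k α (r • x) = r ^ (-α) * Vpot k α x := by
  rw [Vpot, Vpot, norm_smul, Real.norm_of_nonneg hr.le, Real.mul_rpow hr.le (norm_nonneg x)]
  ring

theorem potI_scal (k α a b l : ℝ) (φ : E3 → ℂ) :
    potI k α (scal a b l φ) = Real.exp ((2 * a + 3 * b - α * b) * l) * potI k α φ := by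
  have hV : ∀ x, Vpot k α x = Real.exp (-(α * b * l)) * Vpot k α (Real.exp (-b * l) • x) := by
    intro x
    rw [Vpot_smul k α (Real.exp_pos _), ← Real.exp_mul, ← mul_assoc, ← Real.exp_add,
      show -(α * b * l) + -b * l * -α = 0 by ring, Real.exp_zero, one_mul]
  unfold potI
  calc ∫ x, Vpot k α x * ‖scal a b l φ x‖ ^ 2
      = ∫ x, (Real.exp (-(α * b * l)) * Real.exp (a * l) ^ 2) *
          (fun y => Vpot k α y * ‖φ y‖ ^ 2) (Real.exp (-b * l) • x) := by
        congr 1; funext x; rw [norm_scal, hV x]; ring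
    _ = _ := by
        rw [integral_const_mul, integral_comp_exp_smul volume (fun y => Vpot k α y * ‖φ y‖ ^ 2),
          finrank_euclideanSpace_fin, smul_eq_mul, ← mul_assoc, ← Real.exp_nat_mul,
          ← Real.exp_add, ← Real.exp_add]
        ring_nf

theorem hasFDerivAt_scal (a b l : ℝ) {φ : E3 → ℂ} {x : E3}
    (hφ : DifferentiableAt ℝ φ (Real.exp (-b * l) • x)) :
    HasFDerivAt (scal a b l φ)
      ((Real.exp (a * l) * Real.exp (-b * l)) • fderiv ℝ φ (Real.exp (-b * l) • x)) x := by
  have h := (hφ.hasFDerivAt.comp x ((hasFDerivAt_id x).const_smul (Real.exp (-b * l)))).const_smul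
    (Real.exp (a * l))
  exact h.congr_fderiv (ContinuousLinearMap.ext fun y => by simp [mul_smul])

theorem gradSq_scal (a b l : ℝ) {φ : E3 → ℂ} (hφ : Differentiable ℝ φ) :
    gradSq (scal a b l φ) = Real.exp ((2 * a + b) * l) * gradSq φ := by
  unfold gradSq
  simp_rw [(hasFDerivAt_scal a b l (hφ _)).fderiv, norm_smul, mul_pow]
  rw [integral_const_mul, integral_comp_exp_smul volume (fun y => ‖fderiv ℝ φ y‖ ^ 2),
    finrank_euclideanSpace_fin, smul_eq_mul, ← mul_assoc, Real.norm_of_nonneg (by positivity),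
    mul_pow, ← Real.exp_nat_mul, ← Real.exp_nat_mul, ← Real.exp_add, ← Real.exp_add]
  ring_nf

theorem fderiv_apply_self_of_homogeneous {E : Type*} [NormedAddCommGroup E] [NormedSpace ℝ E]
    {f : E → ℝ} {p : ℝ} {x : E} (hf : ∀ r : ℝ, 0 < r → f (r • x) = r ^ p * f x)
    (hfx : DifferentiableAt ℝ f x) :
    fderiv ℝ f x x = p * f x := by
  have h₁ : HasDerivAt (fun r : ℝ => f (r • x)) (fderiv ℝ f x x) 1 := by
    have hr : HasDerivAt (fun r : ℝ => r • x) x 1 := by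
      simpa using (hasDerivAt_id (1 : ℝ)).smul_const x
    exact hfx.hasFDerivAt.comp_hasDerivAt_of_eq (1 : ℝ) hr (one_smul ℝ x).symm
  have h₂ : HasDerivAt (fun r : ℝ => f (r • x)) (p * f x) 1 := by
    have h := (hasDerivAt_rpow_const (p := p) (Or.inl one_ne_zero)).mul_const (f x)
    rw [Real.one_rpow, mul_one] at h
    exact h.congr_of_eventuallyEq (eventually_of_mem (Ioi_mem_nhds one_pos) fun r hr => hf r hr)
  exact h₁.unique h₂

theorem inner_gradient_Vpot (k : ℝ) {α : ℝ} (hα : α ≠ 0) (x : E3) :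
    ⟪x, gradient (Vpot k α) x⟫ = -α * Vpot k α x := by
  rcases eq_or_ne x 0 with rfl | hx
  · simp [Vpot, Real.zero_rpow (neg_ne_zero.2 hα)]
  have hV : DifferentiableAt ℝ (Vpot k α) x :=
    ((differentiableAt_id.norm ℝ hx).rpow_const (Or.inl (norm_ne_zero_iff.2 hx))).const_mul k
  rw [inner_gradient_right, conj_trivial,
    fderiv_apply_self_of_homogeneous (fun r hr => Vpot_smul k α hr x) hV]

theorem xdVI_eq (k : ℝ) {α : ℝ} (hα : α ≠ 0) (φ : E3 → ℂ) : xdVI k α φ = -α * potI k α φ := by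
  simp_rw [xdVI, potI, inner_gradient_Vpot k hα, mul_assoc, integral_const_mul]

theorem potI_nonneg {k : ℝ} (hk : 0 ≤ k) (α : ℝ) (φ : E3 → ℂ) : 0 ≤ potI k α φ :=
  integral_nonneg fun x => mul_nonneg (mul_nonneg hk (Real.rpow_nonneg (norm_nonneg x) _))
    (by positivity)

theorem quartI_nonneg (φ : E3 → ℂ) : 0 ≤ quartI φ :=
  integral_nonneg fun x => by positivity

theorem hasDerivAt_of_eq_exp_mul {f : ℝ → ℝ} {c A : ℝ} (hf : ∀ l, f l = Real.exp (c * l) * A)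
    (l : ℝ) : HasDerivAt f (c * f l) l := by
  rw [funext hf]
  exact (((hasDerivAt_id l).const_mul c).exp.mul_const A).congr_deriv (by simp; ring)

theorem hasDerivAt_Sk_scal (k : ℝ) {α : ℝ} (hα : α ≠ 0) {φ : E3 → ℂ} (hφ : Differentiable ℝ φ)
    (a b l : ℝ) :
    HasDerivAt (fun l => Sk k α (scal a b l φ)) (Kab k α a b (scal a b l φ)) l := by
  have hG := hasDerivAt_of_eq_exp_mul (fun l => gradSq_scal a b l hφ) l
  have hQ := hasDerivAt_of_eq_exp_mul (fun l => potI_scal k α a b l φ) l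
  have hM := hasDerivAt_of_eq_exp_mul (fun l => massI_scal a b l φ) l
  have hF := hasDerivAt_of_eq_exp_mul (fun l => quartI_scal a b l φ) l
  refine ((((hG.add hQ).add hM).const_mul (1 / 2)).sub (hF.const_mul (1 / 4))).congr_deriv ?_
  rw [Kab, xdVI_eq k hα]
  ring

theorem Kab_three_neg_two (k α : ℝ) (φ : E3 → ℂ) : Kab k α 3 (-2) φ = Pk k α φ := by
  rw [Kab, Pk]
  ring

theorem hasDerivAt_Pk_scal (k : ℝ) {α : ℝ} (hα : α ≠ 0) {φ : E3 → ℂ} (hφ : Differentiable ℝ φ)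
    (l : ℝ) :
    HasDerivAt (fun l => Pk k α (scal 3 (-2) l φ))
      (8 * gradSq (scal 3 (-2) l φ) + 2 * α ^ 2 * potI k α (scal 3 (-2) l φ)
        - 9 * quartI (scal 3 (-2) l φ)) l := by
  have hG := hasDerivAt_of_eq_exp_mul (fun l => gradSq_scal 3 (-2) l hφ) l
  have hX : HasDerivAt (fun l => xdVI k α (scal 3 (-2) l φ))
      (-2 * α ^ 2 * potI k α (scal 3 (-2) l φ)) l := by
    simp_rw [xdVI_eq k hα]
    exact ((hasDerivAt_of_eq_exp_mul (fun l => potI_scal k α 3 (-2) l φ) l).const_mul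
      (-α)).congr_deriv (by ring)
  have hF := hasDerivAt_of_eq_exp_mul (fun l => quartI_scal 3 (-2) l φ) l
  refine (((hG.const_mul 2).sub hX).sub (hF.const_mul (3 / 2))).congr_deriv ?_
  ring

theorem stmt13_general (k α : ℝ) (hk : 0 < k) (hα1 : 1 < α) (hα2 : α ≤ 2)
    (φ : E3 → ℂ) (hd : ContDiff ℝ 2 φ)
    (lam : ℝ) :
    HasDerivAt (fun l => Sk k α (scal 3 (-2) l φ)) (Pk k α (scal 3 (-2) lam φ)) lam ∧
    deriv (deriv (fun l => Sk k α (scal 3 (-2) l φ))) lam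
      ≤ 4 * deriv (fun l => Sk k α (scal 3 (-2) l φ)) lam
        - 3 * Real.exp (6 * lam) * quartI φ ∧
    4 * deriv (fun l => Sk k α (scal 3 (-2) l φ)) lam
        - 3 * Real.exp (6 * lam) * quartI φ
      ≤ 4 * deriv (fun l => Sk k α (scal 3 (-2) l φ)) lam := by
  have hα : 0 < α := by linarith
  have hφ : Differentiable ℝ φ := hd.differentiable (by norm_num)
  have hS (l : ℝ) : HasDerivAt (fun l => Sk k α (scal 3 (-2) l φ)) (Pk k α (scal 3 (-2) l φ)) l :=
    Kab_three_neg_two k α _ ▸ hasDerivAt_Sk_scal k hα.ne' hφ 3 (-2) l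
  have hS' : deriv (fun l => Sk k α (scal 3 (-2) l φ)) = fun l => Pk k α (scal 3 (-2) l φ) :=
    funext fun l => (hS l).deriv
  have hF : quartI (scal 3 (-2) lam φ) = Real.exp (6 * lam) * quartI φ := by
    rw [quartI_scal]; norm_num
  have hF₀ : 0 ≤ Real.exp (6 * lam) * quartI φ :=
    mul_nonneg (Real.exp_pos _).le (quartI_nonneg φ)
  refine ⟨hS lam, ?_, by linarith⟩
  rw [hS', (hasDerivAt_Pk_scal k hα.ne' hφ lam).deriv]
  simp only [Pk, xdVI_eq k hα.ne', hF]
  have hQ := mul_nonneg (mul_nonneg hα.le (sub_nonneg.2 hα2))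
    (potI_nonneg hk.le α (scal 3 (-2) lam φ))
  linarith

theorem stmt13 (k α : ℝ) (hk : 0 < k) (hα1 : 1 < α) (hα2 : α ≤ 2)
    (φ : E3 → ℂ) (hφ : InH1 φ) (hd : ContDiff ℝ 2 φ)
    (hpot : Integrable (fun x => Vpot k α x * ‖φ x‖ ^ 2) volume)
    (hxdv : Integrable (fun x => ⟪x, gradient (Vpot k α) x⟫ * ‖φ x‖ ^ 2) volume)
    (lam : ℝ) :
    HasDerivAt (fun l => Sk k α (scal 3 (-2) l φ)) (Pk k α (scal 3 (-2) lam φ)) lam ∧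
    deriv (deriv (fun l => Sk k α (scal 3 (-2) l φ))) lam
      ≤ 4 * deriv (fun l => Sk k α (scal 3 (-2) l φ)) lam
        - 3 * Real.exp (6 * lam) * quartI φ ∧
    4 * deriv (fun l => Sk k α (scal 3 (-2) l φ)) lam
        - 3 * Real.exp (6 * lam) * quartI φ
      ≤ 4 * deriv (fun l => Sk k α (scal 3 (-2) l φ)) lam :=
  stmt13_general k α hk hα1 hα2 φ hd lam
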